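/- arXiv:2301.02159 — 2 statements merged into one kernel-verified Lean document; each statement's English description precedes it below -/
import Mathlib

section
/- Let T = [x₁, …, x_{N+1}] be a nondegenerate N-simplex in ℝ^N with diameter h_T and inradius ρ_T. For any (N−2)-dimensional subsimplex S and the dihedral angle θ_{ST} along S (the angle between the two facets of T containing S, measured in the Euclidean metric), one has sin θ_{ST} ≥ 2 ρ_T / h_T. -/
/-!
A simplex lies in the slab bounded by the hyperplane of a facet and the parallel hyperplane
through the opposite vertex, and the width of that slab is the height of the vertex over the
facet. A ball inside the simplex fits in the slab, so `2 ρ_T ≤ dist(x₁, aff F₂)`, while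
`dist(x₁, aff S) ≤ |x₁ - x₃| ≤ h_T`.
-/
noncomputable section

open Metric

/-- Diameter of the simplex with vertices `x`. -/
def simplexDiam {N : ℕ} (x : Fin (N + 1) → EuclideanSpace ℝ (Fin N)) : ℝ :=
  Metric.diam (convexHull ℝ (Set.range x))

/-- Inradius: the supremum of the radii of balls contained in the simplex. -/
def simplexInradius {N : ℕ} (x : Fin (N + 1) → EuclideanSpace ℝ (Fin N)) : ℝ :=
  sSup {r : ℝ | ∃ c : EuclideanSpace ℝ (Fin N),
    Metric.closedBall c r ⊆ convexHull ℝ (Set.range x)}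

open Set RealInnerProductSpace

section Slab

variable {V : Type*} [NormedAddCommGroup V] [InnerProductSpace ℝ V]

theorem two_mul_mul_norm_le_of_closedBall_subset_slab {w c : V} {r m M : ℝ} (hr : 0 ≤ r)
    (hball : closedBall c r ⊆ {y | ⟪w, y⟫ ∈ Icc m M}) : 2 * r * ‖w‖ ≤ M - m := by
  rcases eq_or_ne w 0 with rfl | hw
  · obtain ⟨hm, hM⟩ := hball (mem_closedBall_self hr)
    simp only [norm_zero, mul_zero, sub_nonneg]
    exact hm.trans hM
  set e : V := (r / ‖w‖) • w
  have he : ‖e‖ = r := by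
    rw [norm_smul, Real.norm_eq_abs, abs_div, abs_norm, abs_of_nonneg hr,
      div_mul_cancel₀ _ (norm_ne_zero_iff.2 hw)]
  have hwe : ⟪w, e⟫ = r * ‖w‖ := by
    rw [real_inner_smul_right, real_inner_self_eq_norm_sq]
    field_simp
  have hplus := (hball (show c + e ∈ closedBall c r by simp [he])).2
  have hminus := (hball (show c - e ∈ closedBall c r by simp [he])).1
  rw [inner_add_right, hwe] at hplus
  rw [inner_sub_right, hwe] at hminus
  linarith

theorem two_mul_le_infDist_of_closedBall_subset_convexHull {P : AffineSubspace ℝ V} [Nonempty P]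
    [P.direction.HasOrthogonalProjection] {s : Set V} {p c : V} {r : ℝ} (hs : s ⊆ P)
    (hp : p ∉ P) (hr : 0 ≤ r) (hball : closedBall c r ⊆ convexHull ℝ (insert p s)) :
    2 * r ≤ infDist p P := by
  set q : V := ↑(EuclideanGeometry.orthogonalProjection P p)
  set w : V := p - q
  have hw : w ∈ P.directionᗮ :=
    EuclideanGeometry.vsub_orthogonalProjection_mem_direction_orthogonal P p
  have hwP : ∀ y ∈ P, ⟪w, y⟫ = ⟪w, q⟫ := by
    intro y hy
    have h := Submodule.inner_left_of_mem_orthogonal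
      (P.vsub_mem_direction hy (EuclideanGeometry.orthogonalProjection_mem p)) hw
    rwa [vsub_eq_sub, inner_sub_right, sub_eq_zero] at h
  have hslab : convexHull ℝ (insert p s) ⊆ {y | ⟪w, y⟫ ∈ Icc ⟪w, q⟫ (⟪w, q⟫ + ‖w‖ ^ 2)} := by
    refine convexHull_min (insert_subset_iff.2 ⟨?_, fun y hy => ?_⟩)
      ((convex_Icc _ _).linear_preimage (innerₛₗ ℝ w))
    · have hpq : ⟪w, p⟫ = ⟪w, q⟫ + ‖w‖ ^ 2 := by
        rw [← real_inner_self_eq_norm_sq, ← inner_add_right, add_sub_cancel]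
      simp only [mem_ofPred_eq, hpq, mem_Icc]
      exact ⟨le_add_of_nonneg_right (sq_nonneg _), le_rfl⟩
    · simp only [mem_ofPred_eq, hwP y (hs hy), mem_Icc, le_refl, true_and]
      exact le_add_of_nonneg_right (sq_nonneg _)
  have hwidth := two_mul_mul_norm_le_of_closedBall_subset_slab hr (hball.trans hslab)
  have hnorm : ‖w‖ = infDist p P := by
    rw [← EuclideanGeometry.dist_orthogonalProjection_eq_infDist, dist_eq_norm]
  have hwpos : 0 < ‖w‖ :=
    norm_pos_iff.2 (sub_ne_zero.2 fun h => hp (h ▸ EuclideanGeometry.orthogonalProjection_mem p))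
  rw [← hnorm]
  nlinarith

end Slab

section Simplex

variable {N : ℕ} {x : Fin (N + 1) → EuclideanSpace ℝ (Fin N)}

theorem two_mul_simplexInradius_le_infDist (hN : 0 < N) (hx : AffineIndependent ℝ x)
    (i : Fin (N + 1)) :
    2 * simplexInradius x ≤
      infDist (x i) ((affineSpan ℝ (x '' {j | j ≠ i}) : AffineSubspace ℝ _) : Set _) := by
  set P := affineSpan ℝ (x '' {j | j ≠ i})
  have : Nontrivial (Fin (N + 1)) := Fin.nontrivial_iff_two_le.2 (by omega)
  obtain ⟨j, hj⟩ := exists_ne i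
  have : Nonempty P := ⟨⟨x j, subset_affineSpan ℝ _ ⟨j, hj, rfl⟩⟩⟩
  have hxi : x i ∉ P := (hx.mem_affineSpan_iff i _).not.2 fun h => h rfl
  have hrange : range x = insert (x i) (x '' {j | j ≠ i}) := (insert_image_compl_eq_range x i).symm
  rw [← le_div_iff₀' two_pos]
  refine csSup_le ⟨0, x i, ?_⟩ ?_
  · rw [closedBall_zero, singleton_subset_iff]
    exact subset_convexHull ℝ _ ⟨i, rfl⟩
  · rintro r ⟨c, hc⟩
    rcases lt_or_ge r 0 with hr | hr
    · linarith [infDist_nonneg (x := x i) (s := (P : Set _))]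
    · rw [le_div_iff₀' two_pos]
      exact two_mul_le_infDist_of_closedBall_subset_convexHull (subset_affineSpan ℝ _) hxi hr
        (hrange ▸ hc)

theorem infDist_le_simplexDiam (i j : Fin (N + 1)) {s : Set (EuclideanSpace ℝ (Fin N))}
    (hj : x j ∈ s) : infDist (x i) s ≤ simplexDiam x :=
  (infDist_le_dist_of_mem hj).trans <|
    dist_le_diam_of_mem ((finite_range x).isCompact_convexHull ℝ).isBounded
      (subset_convexHull ℝ _ ⟨i, rfl⟩) (subset_convexHull ℝ _ ⟨j, rfl⟩)

end Simplex

-- The paper's vertices `x₁, …, x_{N+1}` are `x 0, …, x N`.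
/-- **Lower bound for the sine of a dihedral angle** (Lemma `lemma:anglebound`).
For a nondegenerate `N`-simplex `T = [x₀, …, x_N]` (`N ≥ 2`), the dihedral angle
`θ_{ST}` along the `(N−2)`-subsimplex `S = [x₂, …, x_N]` between the facets
`F₁ = [x₀, x₂, …, x_N]` and `F₂ = [x₁, x₂, …, x_N]`, defined by
`sin θ_{ST} = dist(x₀, aff F₂) / dist(x₀, aff S)`, satisfies
`sin θ_{ST} ≥ 2 ρ_T / h_T`. -/
theorem sin_dihedral_angle_ge (N : ℕ) (hN : 2 ≤ N)
    (x : Fin (N + 1) → EuclideanSpace ℝ (Fin N))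
    (hx : AffineIndependent ℝ x) :
    2 * simplexInradius x / simplexDiam x ≤
      Metric.infDist (x 0) ((affineSpan ℝ (x '' {i | i ≠ 0}) : AffineSubspace ℝ _) : Set _) /
        Metric.infDist (x 0)
          ((affineSpan ℝ (x '' {i | i ≠ 0 ∧ i ≠ 1}) : AffineSubspace ℝ _) : Set _) := by
  set S := affineSpan ℝ (x '' {i | i ≠ 0 ∧ i ≠ 1})
  set a := infDist (x 0) ((affineSpan ℝ (x '' {i | i ≠ 0}) : AffineSubspace ℝ _) : Set _)
  set b := infDist (x 0) (S : Set _)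
  let k : Fin (N + 1) := ⟨2, by omega⟩
  have hk01 : k ≠ 0 ∧ k ≠ 1 := by
    simp [k, Fin.ext_iff, Nat.mod_eq_of_lt (show 1 < N + 1 by omega)]
  have hk : x k ∈ S := subset_affineSpan ℝ _ ⟨k, hk01, rfl⟩
  have hx0 : x 0 ∉ S := (hx.mem_affineSpan_iff 0 _).not.2 fun h => h.1 rfl
  have hb : 0 < b := (S.closed_of_finiteDimensional.notMem_iff_infDist_pos ⟨_, hk⟩).1 hx0
  have hbh : b ≤ simplexDiam x := infDist_le_simplexDiam 0 k hk
  have hρ : 2 * simplexInradius x ≤ a := two_mul_simplexInradius_le_infDist (by omega) hx 0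
  calc 2 * simplexInradius x / simplexDiam x ≤ a / simplexDiam x :=
        div_le_div_of_nonneg_right hρ (hb.le.trans hbh)
    _ ≤ a / b := div_le_div_of_nonneg_left infDist_nonneg hb hbh

end
end

section
/- Let g(t) be a smooth family of Riemannian metrics with ∂g/∂t = σ. Let (n̄(t), τ̄(t)) and (n(t), τ(t)) be two g(t)-orthonormal pairs spanning the same 2-plane, related by τ = τ̄ cos θ + n̄ sin θ and n = −τ̄ sin θ + n̄ cos θ, with n and n̄ at all times g(t)-orthogonal to fixed hypersurfaces F and F̄ respectively. Then, whenever θ(t) ∈ (0, π), θ̇ = (1/2) σ(n, τ) − (1/2) σ(n̄, τ̄). -/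
/-! Write `cos θ = g(n̄, n)`. For a unit vector `m` that stays `g`-orthogonal to a fixed hyperplane
`F`, differentiating `g(m, m) = 1` gives `g(ṁ, m) = -σ(m, m) / 2`, and differentiating `g(m, f) = 0`
for fixed `f ∈ F` gives `g(ṁ, f) = -σ(m, f)`; since `F` has codimension one this determines
`g(ṁ, w) = σ(m, m) g(m, w) / 2 - σ(m, w)` for every `w`. Substituting this for `n` and `n̄` in
`-θ̇ sin θ = σ(n̄, n) + g((n̄)˙, n) + g(n̄, ṅ)` leaves a trigonometric identity in the rotated
frame, and `sin θ ≠ 0` on `(0, π)`. -/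

open Matrix

noncomputable section

/-- The bilinear form of a matrix: `bilin M v w = vᵀ M w`. -/
def bilin {N : ℕ} (M : Matrix (Fin N) (Fin N) ℝ) (v w : Fin N → ℝ) : ℝ :=
  v ⬝ᵥ M *ᵥ w

/-- Partial derivative `∂ᵢ f` at `x`. -/
def pd {N : ℕ} (i : Fin N) (f : (Fin N → ℝ) → ℝ) (x : Fin N → ℝ) : ℝ :=
  fderiv ℝ f x (Pi.single i 1)

/-- Christoffel symbols `Γˡᵢⱼ` of a metric field `g` (in coordinates). -/
def chr {N : ℕ} (g : (Fin N → ℝ) → Matrix (Fin N) (Fin N) ℝ) (x : Fin N → ℝ)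
    (l i j : Fin N) : ℝ :=
  (1 / 2) * ∑ m, (g x)⁻¹ l m *
    (pd i (fun y => g y j m) x + pd j (fun y => g y i m) x - pd m (fun y => g y i j) x)

/-- Covariant derivative `(∇ₖ σ)ᵢⱼ` of a `(0,2)`-tensor field `σ`. -/
def cd2 {N : ℕ} (g σ : (Fin N → ℝ) → Matrix (Fin N) (Fin N) ℝ) (x : Fin N → ℝ)
    (k i j : Fin N) : ℝ :=
  pd k (fun y => σ y i j) x - ∑ m, chr g x m k i * σ x m j - ∑ m, chr g x m k j * σ x i m

/-- Covariant derivative `(∇ₖ α)ⱼ` of a one-form field `α`. -/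
def cd1 {N : ℕ} (g : (Fin N → ℝ) → Matrix (Fin N) (Fin N) ℝ)
    (α : (Fin N → ℝ) → Fin N → ℝ) (x : Fin N → ℝ) (k j : Fin N) : ℝ :=
  pd k (fun y => α y j) x - ∑ m, chr g x m k j * α x m

/-- Covariant derivative of a vector field: `(∇_Y X)ˡ`. -/
def cdV {N : ℕ} (g : (Fin N → ℝ) → Matrix (Fin N) (Fin N) ℝ)
    (Y X : (Fin N → ℝ) → Fin N → ℝ) (x : Fin N → ℝ) (l : Fin N) : ℝ :=
  ∑ j, Y x j * pd j (fun y => X y l) x + ∑ i, ∑ j, chr g x l i j * Y x j * X x i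

/-- Covariant divergence of a `(0,2)`-tensor field: `(div σ)ⱼ = gᵏⁱ (∇ₖ σ)ᵢⱼ`. -/
def divT {N : ℕ} (g σ : (Fin N → ℝ) → Matrix (Fin N) (Fin N) ℝ) (x : Fin N → ℝ)
    (j : Fin N) : ℝ :=
  ∑ k, ∑ i, (g x)⁻¹ k i * cd2 g σ x k i j

/-- Double covariant divergence `div div σ` of a `(0,2)`-tensor field. -/
def divdivT {N : ℕ} (g σ : (Fin N → ℝ) → Matrix (Fin N) (Fin N) ℝ) (x : Fin N → ℝ) : ℝ :=
  ∑ k, ∑ j, (g x)⁻¹ k j * cd1 g (fun y => divT g σ y) x k j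

/-- Ricci curvature `Rᵢⱼ` in coordinates. -/
def ricci {N : ℕ} (g : (Fin N → ℝ) → Matrix (Fin N) (Fin N) ℝ) (x : Fin N → ℝ)
    (i j : Fin N) : ℝ :=
  ∑ k, pd k (fun y => chr g y k i j) x - ∑ k, pd i (fun y => chr g y k k j) x
    + ∑ k, ∑ l, chr g x k k l * chr g x l i j - ∑ k, ∑ l, chr g x k i l * chr g x l k j

/-- Scalar curvature `R = gⁱʲ Rᵢⱼ`. -/
def scal {N : ℕ} (g : (Fin N → ℝ) → Matrix (Fin N) (Fin N) ℝ) (x : Fin N → ℝ) : ℝ :=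
  ∑ i, ∑ j, (g x)⁻¹ i j * ricci g x i j

/-- `g`-trace of a symmetric matrix: `Tr_g a = tr (g⁻¹ a)`. -/
def trg {N : ℕ} (g a : Matrix (Fin N) (Fin N) ℝ) : ℝ :=
  Matrix.trace (g⁻¹ * a)

/-- `g`-inner product of two symmetric matrices: `⟨a, b⟩_g = tr (g⁻¹ a g⁻¹ b)`. -/
def ipm {N : ℕ} (g a b : Matrix (Fin N) (Fin N) ℝ) : ℝ :=
  Matrix.trace (g⁻¹ * a * (g⁻¹ * b))

/-- Time derivative `σ = ∂g/∂t` of a time-dependent metric field, at time `t`. -/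
def tderiv {N : ℕ} (g : ℝ → (Fin N → ℝ) → Matrix (Fin N) (Fin N) ℝ) (t : ℝ)
    (y : Fin N → ℝ) : Matrix (Fin N) (Fin N) ℝ :=
  Matrix.of fun i j => deriv (fun s => g s y i j) t

section Bilin

variable {N : ℕ} {M : Matrix (Fin N) (Fin N) ℝ}

lemma bilin_eq_toLinearMap₂' (M : Matrix (Fin N) (Fin N) ℝ) (v w : Fin N → ℝ) :
    bilin M v w = Matrix.toLinearMap₂' ℝ M v w :=
  (Matrix.toLinearMap₂'_apply' M v w).symm

lemma bilin_eq_sum (M : Matrix (Fin N) (Fin N) ℝ) (v w : Fin N → ℝ) :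
    bilin M v w = ∑ i, ∑ j, v i * (M i j * w j) := by
  simp [bilin, dotProduct, mulVec, Finset.mul_sum]

@[simp] lemma bilin_add_left (u v w : Fin N → ℝ) :
    bilin M (u + v) w = bilin M u w + bilin M v w :=
  add_dotProduct u v _

@[simp] lemma bilin_add_right (u v w : Fin N → ℝ) :
    bilin M u (v + w) = bilin M u v + bilin M u w := by
  simp [bilin, mulVec_add]

@[simp] lemma bilin_sub_right (u v w : Fin N → ℝ) :
    bilin M u (v - w) = bilin M u v - bilin M u w := by
  simp [bilin, mulVec_sub]

@[simp] lemma bilin_smul_left (c : ℝ) (v w : Fin N → ℝ) : bilin M (c • v) w = c * bilin M v w :=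
  smul_dotProduct c v _

@[simp] lemma bilin_smul_right (c : ℝ) (v w : Fin N → ℝ) : bilin M v (c • w) = c * bilin M v w := by
  simp [bilin, mulVec_smul]

@[simp] lemma bilin_zero_right (v : Fin N → ℝ) : bilin M v 0 = 0 := by
  simp [bilin]

lemma bilin_comm (hM : M.IsSymm) (v w : Fin N → ℝ) : bilin M v w = bilin M w v := by
  rw [bilin, bilin, dotProduct_mulVec, ← mulVec_transpose, hM.eq, dotProduct_comm]

end Bilin

lemma mul_bilin_sub_bilin_of_rotation {N : ℕ} {σ : Matrix (Fin N) (Fin N) ℝ} (hσ : σ.IsSymm)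
    {c s : ℝ} (hcs : s ^ 2 + c ^ 2 = 1)
    {nbar τbar n τ : Fin N → ℝ} (hn : n = (-s) • τbar + c • nbar) (hτ : τ = c • τbar + s • nbar) :
    s * (bilin σ n τ - bilin σ nbar τbar)
      = 2 * bilin σ n nbar - c * (bilin σ nbar nbar + bilin σ n n) := by
  subst hn hτ
  simp only [bilin_add_left, bilin_add_right, bilin_smul_left, bilin_smul_right,
    bilin_comm hσ τbar nbar]
  linear_combination (-s * bilin σ nbar τbar + c * bilin σ nbar nbar) * hcs

lemma sub_bilin_smul_mem {N : ℕ} {M : Matrix (Fin N) (Fin N) ℝ} {m : Fin N → ℝ}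
    {F : Submodule ℝ (Fin N → ℝ)} (hF : Module.finrank ℝ F = N - 1) (hm : bilin M m m = 1)
    (horth : ∀ f ∈ F, bilin M m f = 0) (w : Fin N → ℝ) : w - bilin M m w • m ∈ F := by
  set φ : Module.Dual ℝ (Fin N → ℝ) := Matrix.toLinearMap₂' ℝ M m
  have hφ : ∀ v, φ v = bilin M m v := fun v => (bilin_eq_toLinearMap₂' M m v).symm
  have hφ_ne : φ ≠ 0 := fun h => by simpa [h, hφ] using (hφ m).trans hm
  have hker : F = LinearMap.ker φ := by
    refine Submodule.eq_of_le_of_finrank_eq (fun f hf => by simpa [hφ] using horth f hf) ?_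
    have := φ.finrank_ker_add_one_of_ne_zero hφ_ne
    rw [Module.finrank_fin_fun] at this
    omega
  rw [hker, LinearMap.mem_ker, map_sub, map_smul, hφ, hφ, hm, smul_eq_mul, mul_one, sub_self]

section Deriv

open Filter Topology

variable {N : ℕ} {g : ℝ → Matrix (Fin N) (Fin N) ℝ} {t : ℝ}

def matrixDeriv (g : ℝ → Matrix (Fin N) (Fin N) ℝ) (t : ℝ) : Matrix (Fin N) (Fin N) ℝ :=
  Matrix.of fun i j => deriv (fun s => g s i j) t

lemma isSymm_matrixDeriv (hsym : ∀ s, (g s).IsSymm) (t : ℝ) : (matrixDeriv g t).IsSymm := by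
  ext i j
  simp only [matrixDeriv, transpose_apply, of_apply]
  congr 1
  funext s
  exact (hsym s).apply i j

lemma HasDerivAt.bilin {g' : Matrix (Fin N) (Fin N) ℝ} {v w : ℝ → Fin N → ℝ} {v' w' : Fin N → ℝ}
    (hg : ∀ i j, HasDerivAt (fun s => g s i j) (g' i j) t) (hv : HasDerivAt v v' t)
    (hw : HasDerivAt w w' t) :
    HasDerivAt (fun s => bilin (g s) (v s) (w s))
      (bilin g' (v t) (w t) + bilin (g t) v' (w t) + bilin (g t) (v t) w') t := by
  simp only [bilin_eq_sum, ← Finset.sum_add_distrib]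
  refine HasDerivAt.fun_sum fun i _ => HasDerivAt.fun_sum fun j _ => ?_
  exact ((hasDerivAt_pi.1 hv i).fun_mul ((hg i j).fun_mul (hasDerivAt_pi.1 hw j))).congr_deriv
    (by ring)

lemma bilin_deriv_left_of_unit_normal (hg : ∀ i j, DifferentiableAt ℝ (fun s => g s i j) t)
    (hsym : (g t).IsSymm) {m : ℝ → Fin N → ℝ} (hm : DifferentiableAt ℝ m t)
    {F : Submodule ℝ (Fin N → ℝ)} (hF : Module.finrank ℝ F = N - 1)
    (hunit : ∀ᶠ s in 𝓝 t, bilin (g s) (m s) (m s) = 1)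
    (horth : ∀ᶠ s in 𝓝 t, ∀ f ∈ F, bilin (g s) (m s) f = 0) (w : Fin N → ℝ) :
    bilin (g t) (deriv m t) w
      = bilin (matrixDeriv g t) (m t) (m t) / 2 * bilin (g t) (m t) w
        - bilin (matrixDeriv g t) (m t) w := by
  have hprod {v : ℝ → Fin N → ℝ} {v' : Fin N → ℝ} (hv : HasDerivAt v v' t) :=
    HasDerivAt.bilin (g' := matrixDeriv g t) (fun i j => (hg i j).hasDerivAt) hm.hasDerivAt hv
  have hnormal : bilin (g t) (deriv m t) (m t) = -(bilin (matrixDeriv g t) (m t) (m t) / 2) := by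
    have h := (hprod hm.hasDerivAt).unique
      ((hasDerivAt_const t (1 : ℝ)).congr_of_eventuallyEq hunit)
    rw [bilin_comm hsym (m t) (deriv m t)] at h
    linear_combination h / 2
  have htangent (f : Fin N → ℝ) (hf : f ∈ F) :
      bilin (g t) (deriv m t) f = -bilin (matrixDeriv g t) (m t) f := by
    have h := (hprod (hasDerivAt_const t f)).unique
      ((hasDerivAt_const t (0 : ℝ)).congr_of_eventuallyEq (horth.mono fun s hs => hs f hf))
    rw [bilin_zero_right] at h
    linear_combination h
  set c := bilin (g t) (m t) w
  have hmem := sub_bilin_smul_mem hF hunit.self_of_nhds horth.self_of_nhds w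
  calc bilin (g t) (deriv m t) w
      = bilin (g t) (deriv m t) (w - c • m t) + c * bilin (g t) (deriv m t) (m t) := by
        rw [bilin_sub_right, bilin_smul_right]; ring
    _ = _ := by
        rw [htangent _ hmem, hnormal, bilin_sub_right, bilin_smul_right]; ring

end Deriv

theorem angle_evolution_general
    (N : ℕ) (g : ℝ → Matrix (Fin N) (Fin N) ℝ)
    (nbar τbar n τv : ℝ → Fin N → ℝ) (θ : ℝ → ℝ)
    (F Fbar : Submodule ℝ (Fin N → ℝ))
    (hdimF : Module.finrank ℝ F = N - 1)
    (hdimFbar : Module.finrank ℝ Fbar = N - 1)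
    (hg : ∀ i j, Differentiable ℝ fun s => g s i j)
    (hnbar : ∀ i, Differentiable ℝ fun s => nbar s i)
    (hn : ∀ i, Differentiable ℝ fun s => n s i)
    (hθ : Differentiable ℝ θ)
    (hsym : ∀ t, (g t).IsSymm)
    (hnbarU : ∀ t, bilin (g t) (nbar t) (nbar t) = 1)
    (hnτbar : ∀ t, bilin (g t) (nbar t) (τbar t) = 0)
    (hnU : ∀ t, bilin (g t) (n t) (n t) = 1)
    (hrotτ : ∀ t, τv t = Real.cos (θ t) • τbar t + Real.sin (θ t) • nbar t)
    (hrotn : ∀ t, n t = (-Real.sin (θ t)) • τbar t + Real.cos (θ t) • nbar t)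
    (hnF : ∀ t, ∀ w ∈ F, bilin (g t) (n t) w = 0)
    (hnbarFbar : ∀ t, ∀ w ∈ Fbar, bilin (g t) (nbar t) w = 0)
    (t : ℝ) (hθt : θ t ∈ Set.Ioo 0 Real.pi) :
    deriv θ t =
      (1 / 2) * bilin (Matrix.of fun i j => deriv (fun s => g s i j) t) (n t) (τv t)
        - (1 / 2) * bilin (Matrix.of fun i j => deriv (fun s => g s i j) t) (nbar t) (τbar t) := by
  change deriv θ t = 1 / 2 * bilin (matrixDeriv g t) (n t) (τv t)
    - 1 / 2 * bilin (matrixDeriv g t) (nbar t) (τbar t)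
  have hgt i j := (hg i j).differentiableAt (x := t)
  have hnt : DifferentiableAt ℝ n t := differentiableAt_pi.2 fun i => (hn i).differentiableAt
  have hnbart : DifferentiableAt ℝ nbar t :=
    differentiableAt_pi.2 fun i => (hnbar i).differentiableAt
  have hcos (s : ℝ) : bilin (g s) (nbar s) (n s) = Real.cos (θ s) := by
    rw [hrotn s, bilin_add_right, bilin_smul_right, bilin_smul_right, hnτbar s, hnbarU s]
    ring
  have hderiv := (HasDerivAt.bilin (g' := matrixDeriv g t) (fun i j => (hgt i j).hasDerivAt)
    hnbart.hasDerivAt hnt.hasDerivAt).unique (by simpa only [hcos] using (hθ t).hasDerivAt.cos)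
  rw [bilin_comm (hsym t) (nbar t) (deriv n t),
    bilin_deriv_left_of_unit_normal hgt (hsym t) hnbart hdimFbar (.of_forall hnbarU)
      (.of_forall hnbarFbar),
    bilin_deriv_left_of_unit_normal hgt (hsym t) hnt hdimF (.of_forall hnU) (.of_forall hnF),
    bilin_comm (hsym t) (n t), hcos] at hderiv
  have hrot := mul_bilin_sub_bilin_of_rotation (isSymm_matrixDeriv hsym t)
    (Real.sin_sq_add_cos_sq (θ t)) (hrotn t) (hrotτ t)
  have hsin : Real.sin (θ t) ≠ 0 := (Real.sin_pos_of_pos_of_lt_pi hθt.1 hθt.2).ne'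
  refine mul_left_cancel₀ hsin ?_
  linear_combination hderiv - hrot / 2

/-- **Evolution of angles under metric deformation** (Lemma `lemma:angledot`),
pointwise.  Let `g(t)` be a family of metrics with `σ = ∂g/∂t`, let
`(n̄(t), τ̄(t))` and `(n(t), τ(t))` be `g(t)`-orthonormal pairs spanning a common
2-plane and related by `τ = τ̄ cos θ + n̄ sin θ`, `n = −τ̄ sin θ + n̄ cos θ`, with
`n` (resp. `n̄`) at all times `g(t)`-orthogonal to a fixed hyperplane `F`
(resp. `F̄`).  Then, whenever `θ(t) ∈ (0, π)`,
`θ̇ = (1/2) σ(n,τ) − (1/2) σ(n̄,τ̄)`. -/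
theorem angle_evolution
    (N : ℕ) (g : ℝ → Matrix (Fin N) (Fin N) ℝ)
    (nbar τbar n τv : ℝ → Fin N → ℝ) (θ : ℝ → ℝ)
    (F Fbar : Submodule ℝ (Fin N → ℝ))
    (hdimF : Module.finrank ℝ F = N - 1)
    (hdimFbar : Module.finrank ℝ Fbar = N - 1)
    (hg : ∀ i j, Differentiable ℝ fun s => g s i j)
    (hnbar : ∀ i, Differentiable ℝ fun s => nbar s i)
    (hτbar : ∀ i, Differentiable ℝ fun s => τbar s i)
    (hn : ∀ i, Differentiable ℝ fun s => n s i)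
    (hτv : ∀ i, Differentiable ℝ fun s => τv s i)
    (hθ : Differentiable ℝ θ)
    (hsym : ∀ t, (g t).IsSymm) (hpos : ∀ t, (g t).PosDef)
    (hnbarU : ∀ t, bilin (g t) (nbar t) (nbar t) = 1)
    (hτbarU : ∀ t, bilin (g t) (τbar t) (τbar t) = 1)
    (hnτbar : ∀ t, bilin (g t) (nbar t) (τbar t) = 0)
    (hnU : ∀ t, bilin (g t) (n t) (n t) = 1)
    (hτU : ∀ t, bilin (g t) (τv t) (τv t) = 1)
    (hnτ : ∀ t, bilin (g t) (n t) (τv t) = 0)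
    (hrotτ : ∀ t, τv t = Real.cos (θ t) • τbar t + Real.sin (θ t) • nbar t)
    (hrotn : ∀ t, n t = (-Real.sin (θ t)) • τbar t + Real.cos (θ t) • nbar t)
    (hnF : ∀ t, ∀ w ∈ F, bilin (g t) (n t) w = 0)
    (hnbarFbar : ∀ t, ∀ w ∈ Fbar, bilin (g t) (nbar t) w = 0)
    (t : ℝ) (hθt : θ t ∈ Set.Ioo 0 Real.pi) :
    deriv θ t =
      (1 / 2) * bilin (Matrix.of fun i j => deriv (fun s => g s i j) t) (n t) (τv t)
        - (1 / 2) * bilin (Matrix.of fun i j => deriv (fun s => g s i j) t) (nbar t) (τbar t) :=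
  angle_evolution_general N g nbar τbar n τv θ F Fbar hdimF hdimFbar hg hnbar hn hθ hsym hnbarU
    hnτbar hnU hrotτ hrotn hnF hnbarFbar t hθt

end
end
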